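/- arXiv:2008.03757 — 3 statements merged into one kernel-verified Lean document; each statement's English description precedes it below -/
import Mathlib

section
/- Let A be a finite product set A = A_1 × A_2 × ... × A_n where each A_i is a nonempty finite set of real numbers with at most two elements, and let x̃ ∈ ℝ^n. Suppose x_1, ..., x_m ∈ A are the m distinct nearest elements of A to x̃ in Euclidean distance, i.e., ‖x_1 − x̃‖² < ‖x_2 − x̃‖² < ... < ‖x_m − x̃‖² < ‖x − x̃‖² for all x ∈ A \ {x_1,...,x_m}. Then x_m has Hamming distance exactly 1 from some element of {x_1, ..., x_{m−1}} (for m ≥ 2). -/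
/-- If `x 0, …, x (m-1)` are the `m` distinct nearest elements (in Euclidean
distance, strictly ordered) of a product set `A = A_1 × ⋯ × A_n` (each `A i` nonempty with at
most two elements) to `x̃`, then the `m`-th nearest vector has Hamming distance exactly `1`
from some earlier one. -/
theorem stmt0 (n m : ℕ) (hm : 2 ≤ m) (A : Fin n → Finset ℝ)
    (hA1 : ∀ i, (A i).Nonempty) (hA2 : ∀ i, (A i).card ≤ 2)
    (xt : Fin n → ℝ) (x : Fin m → (Fin n → ℝ))
    (hx : ∀ k i, x k i ∈ A i)
    (hsorted : ∀ k l : Fin m, k < l →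
      ∑ i, (x k i - xt i) ^ 2 < ∑ i, (x l i - xt i) ^ 2)
    (hnear : ∀ y : Fin n → ℝ, (∀ i, y i ∈ A i) → y ∉ Set.range x →
      ∑ i, (x ⟨m - 1, by omega⟩ i - xt i) ^ 2 < ∑ i, (y i - xt i) ^ 2) :
    ∃ j : Fin m, (j : ℕ) < m - 1 ∧
      {i : Fin n | x ⟨m - 1, by omega⟩ i ≠ x j i}.ncard = 1 := by
  have h0m : (0 : ℕ) < m := by omega
  set z : Fin n → ℝ := x ⟨m - 1, by omega⟩ with hz
  set x0 : Fin n → ℝ := x ⟨0, h0m⟩ with hx0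
  have hlt : ∑ i, (x0 i - xt i) ^ 2 < ∑ i, (z i - xt i) ^ 2 := by
    apply hsorted
    simp [Fin.lt_def]; omega
  have hex : ∃ i, (x0 i - xt i) ^ 2 < (z i - xt i) ^ 2 := by
    by_contra h
    push_neg at h
    exact absurd (Finset.sum_le_sum fun i _ => h i) (not_le.mpr hlt)
  obtain ⟨i, hi⟩ := hex
  have hne : z i ≠ x0 i := fun h => by rw [h] at hi; exact lt_irrefl _ hi
  set y : Fin n → ℝ := Function.update z i (x0 i) with hy
  have hyA : ∀ i', y i' ∈ A i' := by
    intro i'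
    by_cases h : i' = i
    · subst h; simpa [hy] using hx _ i'
    · simpa [hy, Function.update_of_ne h] using hx _ i'
  have hdist : ∑ i', (y i' - xt i') ^ 2 < ∑ i', (z i' - xt i') ^ 2 := by
    have key : ∑ i', ((y i' - xt i') ^ 2 - (z i' - xt i') ^ 2)
        = (x0 i - xt i) ^ 2 - (z i - xt i) ^ 2 := by
      rw [Finset.sum_eq_single i]
      · simp [hy]
      · intro b _ hb; simp [hy, Function.update_of_ne hb]
      · simp
    rw [Finset.sum_sub_distrib] at key
    linarith
  have hyr : y ∈ Set.range x := by
    by_contra h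
    exact absurd (hnear y hyA h) (not_lt.mpr (le_of_lt hdist))
  obtain ⟨j, hj⟩ := hyr
  have hjz : x j ≠ z := by
    intro h
    apply hne
    have h1 : x j i = y i := congrFun hj i
    rw [h] at h1
    rw [h1]; simp [hy]
  refine ⟨j, ?_, ?_⟩
  · have hne' : (j : ℕ) ≠ m - 1 := by
      intro h
      have hj2 : j = ⟨m - 1, by omega⟩ := Fin.ext h
      exact hjz (by rw [hz, hj2])
    have := j.isLt
    omega
  · have hset : {i' : Fin n | z i' ≠ x j i'} = {i} := by
      ext i'
      simp only [Set.mem_setOf_eq, Set.mem_singleton_iff, hj]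
      constructor
      · intro h
        by_contra hii
        exact h (by simp [hy, Function.update_of_ne hii])
      · intro h
        subst h
        simpa [hy] using hne
    rw [hset, Set.ncard_singleton]
end

section
/- Let (X, Y) be jointly Gaussian real random variables with mean zero, unit variances, and correlation ρ ∈ [−1, 1]. Then E[sign(X) sign(Y)] = (2/π) arcsin(ρ). -/
/-!
Both the integrand and the standard Gaussian measure on `ℝ²` behave well in polar coordinates:
the integrand is invariant under positive scaling, so the radial factor `r e^{-r²/2}` integrates
to `1` and the expectation is the average over the circle of `sign (cos θ) * sign (cos (θ - α))`,
where `ρ = cos α`, `α = arccos ρ`. The two signs disagree on a set of angles of length `4 α`,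
so the average is `1 - 2 α / π = (2 / π) arcsin ρ`.
-/

open Real MeasureTheory ProbabilityTheory Set

/-- The one-bit quantizer: `sign a = +1` if `a ≥ 0`, `−1` otherwise. -/
noncomputable def obSign (a : ℝ) : ℝ := if 0 ≤ a then 1 else -1

@[fun_prop]
lemma measurable_obSign : Measurable obSign :=
  Measurable.ite measurableSet_Ici measurable_const measurable_const

lemma obSign_of_pos {a : ℝ} (h : 0 < a) : obSign a = 1 := if_pos h.le

lemma obSign_of_neg {a : ℝ} (h : a < 0) : obSign a = -1 := if_neg h.not_ge

lemma abs_obSign (a : ℝ) : |obSign a| = 1 := by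
  unfold obSign; split_ifs <;> simp

lemma obSign_mul_of_pos {r : ℝ} (hr : 0 < r) (a : ℝ) : obSign (r * a) = obSign a := by
  simp only [obSign, mul_nonneg_iff_of_pos_left hr]

lemma obSign_cos_eq_one {x : ℝ} (hx : |x| < π / 2) : obSign (cos x) = 1 :=
  obSign_of_pos (cos_pos_of_mem_Ioo (abs_lt.mp hx))

lemma obSign_cos_eq_neg_one {x : ℝ} (h₁ : π / 2 < |x|) (h₂ : |x| < π + π / 2) :
    obSign (cos x) = -1 := by
  rw [← cos_abs]
  exact obSign_of_neg (cos_neg_of_pi_div_two_lt_of_lt h₁ h₂)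

lemma intervalIntegrable_of_abs_le {g : ℝ → ℝ} {C : ℝ} (hg : Measurable g) (hC : ∀ x, |g x| ≤ C)
    (a b : ℝ) : IntervalIntegrable g volume a b :=
  intervalIntegrable_const.mono_fun' hg.aestronglyMeasurable (ae_of_all _ hC)

lemma intervalIntegrable_obSign_cos (a b : ℝ) :
    IntervalIntegrable (fun x ↦ obSign (cos x)) volume a b :=
  intervalIntegrable_of_abs_le (measurable_obSign.comp measurable_cos)
    (fun _ ↦ (abs_obSign _).le) a b

lemma gaussianPDFReal_mul_gaussianPDFReal_polar (r θ : ℝ) :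
    gaussianPDFReal 0 1 (r * cos θ) * gaussianPDFReal 0 1 (r * sin θ)
      = (2 * π)⁻¹ * exp (-r ^ 2 / 2) := by
  have h2π : (√(2 * π))⁻¹ * (√(2 * π))⁻¹ = (2 * π)⁻¹ := by
    rw [← mul_inv, mul_self_sqrt (by positivity)]
  simp only [gaussianPDFReal, NNReal.coe_one, mul_one, sub_zero]
  rw [mul_mul_mul_comm, h2π, ← exp_add]
  congr 2
  linear_combination (-r ^ 2 / 2) * sin_sq_add_cos_sq θ

lemma gaussianReal_prod_gaussianReal {μ μ' : ℝ} {v v' : NNReal} (hv : v ≠ 0) (hv' : v' ≠ 0) :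
    (gaussianReal μ v).prod (gaussianReal μ' v')
      = volume.withDensity fun p : ℝ × ℝ ↦ gaussianPDF μ v p.1 * gaussianPDF μ' v' p.2 := by
  rw [gaussianReal_of_var_ne_zero μ hv, gaussianReal_of_var_ne_zero μ' hv',
    prod_withDensity (measurable_gaussianPDF μ v) (measurable_gaussianPDF μ' v'),
    Measure.volume_eq_prod]

theorem integral_gaussianReal_prod_eq_integral_polarCoord (f : ℝ × ℝ → ℝ) :
    ∫ p, f p ∂(gaussianReal 0 1).prod (gaussianReal 0 1)
      = ∫ q in Ioi (0 : ℝ) ×ˢ Ioo (-π) π,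
          (2 * π)⁻¹ * (q.1 * exp (-q.1 ^ 2 / 2)) * f (q.1 * cos q.2, q.1 * sin q.2) := by
  rw [gaussianReal_prod_gaussianReal one_ne_zero one_ne_zero, integral_withDensity_eq_integral_toReal_smul (by fun_prop)
    (ae_of_all _ fun _ ↦ ENNReal.mul_lt_top gaussianPDF_lt_top gaussianPDF_lt_top),
    ← integral_comp_polarCoord_symm, polarCoord_target]
  refine setIntegral_congr_fun (measurableSet_Ioi.prod measurableSet_Ioo) fun q _ ↦ ?_
  simp only [polarCoord_symm_apply, ENNReal.toReal_mul, toReal_gaussianPDF, smul_eq_mul,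
    gaussianPDFReal_mul_gaussianPDFReal_polar]
  ring

theorem integral_mul_exp_neg_sq_div_two_Ioi :
    ∫ r in Ioi (0 : ℝ), r * exp (-r ^ 2 / 2) = 1 := by
  have h := integral_mul_cexp_neg_mul_sq (b := 1 / 2) (by norm_num)
  norm_num at h
  apply Complex.ofReal_injective
  rw [← integral_complex_ofReal]
  push_cast
  rw [← h]
  refine setIntegral_congr_fun measurableSet_Ioi fun r _ ↦ ?_
  ring_nf

theorem integral_gaussianReal_prod_of_forall_smul_eq {f : ℝ × ℝ → ℝ}
    (hf : ∀ r : ℝ, 0 < r → ∀ p, f (r • p) = f p) :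
    ∫ p, f p ∂(gaussianReal 0 1).prod (gaussianReal 0 1)
      = (2 * π)⁻¹ * ∫ θ in (-π)..π, f (cos θ, sin θ) := by
  rw [integral_gaussianReal_prod_eq_integral_polarCoord,
    setIntegral_congr_fun (measurableSet_Ioi.prod measurableSet_Ioo)
      (g := fun q ↦ q.1 * exp (-q.1 ^ 2 / 2) * ((2 * π)⁻¹ * f (cos q.2, sin q.2))),
    Measure.volume_eq_prod, setIntegral_prod_mul (fun r ↦ r * exp (-r ^ 2 / 2))
      (fun θ ↦ (2 * π)⁻¹ * f (cos θ, sin θ)), integral_mul_exp_neg_sq_div_two_Ioi, one_mul,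
    integral_const_mul, intervalIntegral.integral_of_le (by linarith [pi_pos]),
    integral_Ioc_eq_integral_Ioo]
  rintro ⟨r, θ⟩ ⟨hr, -⟩
  have := hf r hr (cos θ, sin θ)
  simp only [Prod.smul_mk, smul_eq_mul] at this
  simp only [this]
  ring

theorem integral_obSign_cos {α : ℝ} (hα : α ∈ Icc 0 π) :
    ∫ x in (-(π / 2) - α)..(π / 2 - α), obSign (cos x) = π - 2 * α := by
  obtain ⟨hα₀, hαπ⟩ := hα
  have hneg : ∫ x in (-(π / 2) - α)..(-(π / 2)), obSign (cos x) = -α := by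
    rw [intervalIntegral.integral_congr_Ioo_of_le (g := fun _ ↦ -1) (by linarith)
      fun x ⟨h₁, h₂⟩ ↦ obSign_cos_eq_neg_one (by rw [abs_of_neg (by linarith)]; linarith)
        (by rw [abs_of_neg (by linarith)]; linarith)]
    simp
  have hpos : ∫ x in (-(π / 2))..(π / 2 - α), obSign (cos x) = π - α := by
    rw [intervalIntegral.integral_congr_Ioo_of_le (g := fun _ ↦ 1) (by linarith)
      fun x ⟨h₁, h₂⟩ ↦ obSign_cos_eq_one (abs_lt.mpr ⟨h₁, by linarith⟩)]
    rw [intervalIntegral.integral_const, smul_eq_mul, mul_one]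
    ring
  rw [← intervalIntegral.integral_add_adjacent_intervals (intervalIntegrable_obSign_cos _ _)
    (intervalIntegrable_obSign_cos _ _), hneg, hpos]
  ring

theorem integral_obSign_cos_mul_obSign_cos_sub {α : ℝ} (hα : α ∈ Icc 0 π) :
    ∫ θ in (-π)..π, obSign (cos θ) * obSign (cos (θ - α)) = 2 * π - 4 * α := by
  have hper : Function.Periodic (fun θ ↦ obSign (cos θ) * obSign (cos (θ - α))) (2 * π) :=
    fun θ ↦ by simp only [cos_add_two_pi, add_sub_right_comm]
  -- Over the period `(-π/2, 3π/2)`, `obSign (cos θ)` is `1` on the first half, `-1` on the second.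
  have hshift := hper.intervalIntegral_add_eq (-π) (-(π / 2))
  rw [show -π + 2 * π = π by ring, show -(π / 2) + 2 * π = π + π / 2 by ring] at hshift
  have hint (a b : ℝ) :
      IntervalIntegrable (fun θ ↦ obSign (cos θ) * obSign (cos (θ - α))) volume a b :=
    intervalIntegrable_of_abs_le (by fun_prop)
      (fun θ ↦ by rw [abs_mul, abs_obSign, abs_obSign, one_mul]) a b
  have hright : ∫ θ in (-(π / 2))..(π / 2), obSign (cos θ) * obSign (cos (θ - α))
      = ∫ θ in (-(π / 2))..(π / 2), obSign (cos (θ - α)) :=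
    intervalIntegral.integral_congr_Ioo_of_le (by linarith [pi_pos]) fun θ ⟨h₁, h₂⟩ ↦ by
      simp only [obSign_cos_eq_one (abs_lt.mpr ⟨h₁, h₂⟩), one_mul]
  have hleft : ∫ θ in (π / 2)..(π + π / 2), obSign (cos θ) * obSign (cos (θ - α))
      = -∫ θ in (π / 2)..(π + π / 2), obSign (cos (θ - α)) := by
    rw [← intervalIntegral.integral_neg]
    refine intervalIntegral.integral_congr_Ioo_of_le (by linarith [pi_pos]) fun θ ⟨h₁, h₂⟩ ↦ ?_
    have hθ : 0 < θ := by linarith [pi_pos]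
    simp only [obSign_cos_eq_neg_one (by rwa [abs_of_pos hθ]) (by rwa [abs_of_pos hθ]), neg_one_mul]
  have hreflect : ∫ x in (π / 2 - α)..(π + π / 2 - α), obSign (cos x)
      = ∫ x in (-(π / 2) - (π - α))..(π / 2 - (π - α)), obSign (cos x) := by
    have h := intervalIntegral.integral_comp_neg (a := -(π / 2) - (π - α)) (b := π / 2 - (π - α))
      fun x ↦ obSign (cos x)
    simp only [cos_neg] at h
    rw [h]
    congr 1 <;> ring
  obtain ⟨hα₀, hαπ⟩ := hα
  rw [hshift, ← intervalIntegral.integral_add_adjacent_intervals (hint _ (π / 2)) (hint _ _),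
    hright, hleft, intervalIntegral.integral_comp_sub_right (fun x ↦ obSign (cos x)),
    intervalIntegral.integral_comp_sub_right (fun x ↦ obSign (cos x)), hreflect,
    integral_obSign_cos ⟨hα₀, hαπ⟩, integral_obSign_cos ⟨by linarith, by linarith⟩]
  ring

/-- arcsine / Grothendieck identity: if `(X, Y)` is a standard jointly
Gaussian pair with correlation `ρ ∈ [−1, 1]`, realized as `X = Z₁`,
`Y = ρ Z₁ + √(1−ρ²) Z₂` with `Z₁, Z₂` i.i.d. `N(0,1)`, then
`E[sign(X) sign(Y)] = (2/π) arcsin ρ`. -/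
theorem stmt8 (ρ : ℝ) (hρ : ρ ∈ Set.Icc (-1 : ℝ) 1) :
    (∫ z : ℝ × ℝ,
        obSign z.1 * obSign (ρ * z.1 + Real.sqrt (1 - ρ ^ 2) * z.2)
        ∂((gaussianReal 0 1).prod (gaussianReal 0 1)))
      = (2 / π) * Real.arcsin ρ := by
  obtain ⟨hρ₁, hρ₂⟩ := hρ
  have hrotate (θ : ℝ) : ρ * cos θ + √(1 - ρ ^ 2) * sin θ = cos (θ - arccos ρ) := by
    rw [cos_sub, cos_arccos hρ₁ hρ₂, sin_arccos]
    ring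
  rw [integral_gaussianReal_prod_of_forall_smul_eq fun r hr p ↦ ?_]
  · simp only [hrotate]
    rw [integral_obSign_cos_mul_obSign_cos_sub ⟨arccos_nonneg ρ, arccos_le_pi ρ⟩,
      arccos_eq_pi_div_two_sub_arcsin]
    field_simp
    ring
  · simp only [Prod.smul_fst, Prod.smul_snd, smul_eq_mul]
    rw [show ρ * (r * p.1) + √(1 - ρ ^ 2) * (r * p.2) = r * (ρ * p.1 + √(1 - ρ ^ 2) * p.2) by ring,
      obSign_mul_of_pos hr, obSign_mul_of_pos hr]
end

section
/- Let M ∈ ℝ^{N×N} be a positive semidefinite matrix with unit diagonal (a correlation matrix). Define arcsin(M) entrywise. Then arcsin(M) − M is positive semidefinite. -/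
/-!
For `|x| < 1`, `arcsin x - x = ∑_{k ≥ 1} c_k x^(2k+1)` with
`c_k = (2k choose k) / (4^k (2k+1)) ≥ 0`: the series `∑ (2k choose k) / 4^k x^(2k)` solves
`(1 - x²) y' = x y` with `y 0 = 1`, so it is `(1 - x²)^(-1/2) = arcsin'`, and integrating termwise
gives the arcsine series. By the Schur product theorem every entrywise power of a positive
semidefinite matrix is positive semidefinite, hence so is every entrywise power series with
nonnegative coefficients. The entries of a correlation matrix `M` lie in `[-1, 1]`, so this applies
to `c • M` for `0 < c < 1`, and the case `c = 1` follows because the positive semidefinite cone is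
closed.
-/

open Filter Topology Set Matrix
open scoped ComplexOrder

section PowerSeriesBounds

variable {r : ℝ}

lemma summable_two_mul_succ_mul_pow (hr0 : 0 ≤ r) (hr1 : r < 1) :
    Summable fun k : ℕ => 2 * (k + 1) * r ^ k := by
  have hlin := summable_pow_mul_geometric_of_norm_lt_one 1
    (by rwa [Real.norm_eq_abs, abs_of_nonneg hr0] : ‖r‖ < 1)
  refine ((hlin.add (summable_geometric_of_lt_one hr0 hr1)).mul_left 2).congr fun k => ?_
  simp only [pow_one]
  ring

lemma norm_mul_pow_le {c x : ℝ} {k m : ℕ} (hc : |c| ≤ 2 * (k + 1)) (hx : |x| ≤ r) (hr : r ≤ 1)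
    (hkm : k ≤ m) : ‖c * x ^ m‖ ≤ 2 * (k + 1) * r ^ k := by
  have hr0 : 0 ≤ r := (abs_nonneg x).trans hx
  rw [Real.norm_eq_abs, abs_mul, abs_pow]
  calc |c| * |x| ^ m ≤ 2 * (k + 1) * r ^ m := by gcongr
    _ ≤ 2 * (k + 1) * r ^ k := by gcongr _ * ?_; exact pow_le_pow_of_le_one hr0 hr hkm

variable {c : ℕ → ℝ} {e : ℕ → ℕ}

lemma summable_mul_pow (hc : ∀ k, |c k| ≤ 2 * (k + 1)) (he : ∀ k, k ≤ e k) {x : ℝ}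
    (hx : |x| < 1) : Summable fun k => c k * x ^ e k :=
  .of_norm_bounded (summable_two_mul_succ_mul_pow (abs_nonneg x) hx)
    fun k => norm_mul_pow_le (hc k) le_rfl hx.le (he k)

lemma hasDerivAt_tsum_mul_pow (hc : ∀ k, |c k| ≤ 2 * (k + 1))
    (hc' : ∀ k, |c k * e k| ≤ 2 * (k + 1)) (he : ∀ k, k ≤ e k - 1) {x : ℝ} (hx : |x| < 1) :
    HasDerivAt (fun y => ∑' k, c k * y ^ e k) (∑' k, c k * e k * x ^ (e k - 1)) x := by
  set r := (|x| + 1) / 2 with hr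
  have hxr : |x| < r := by linarith
  have hr1 : r < 1 := by linarith
  refine hasDerivAt_tsum_of_isPreconnected
    (summable_two_mul_succ_mul_pow ((abs_nonneg x).trans hxr.le) hr1) isOpen_Ioo
    isPreconnected_Ioo (g := fun k y => c k * y ^ e k)
    (g' := fun k y => c k * e k * y ^ (e k - 1)) (fun k y _ => ?_) (fun k y hy => ?_) (y₀ := 0)
    ?_ ?_ (abs_lt.mp hxr)
  · simpa [mul_assoc] using (hasDerivAt_pow (e k) y).const_mul (c k)
  · exact norm_mul_pow_le (hc' k) (abs_le.mpr ⟨hy.1.le, hy.2.le⟩) hr1.le (he k)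
  · exact ⟨by linarith [abs_nonneg x], by linarith [abs_nonneg x]⟩
  · exact summable_mul_pow hc (fun k => (he k).trans (Nat.sub_le _ _)) (by simp)

end PowerSeriesBounds

/-- The coefficient of `x ^ (2 * k)` in `(1 - x ^ 2) ^ (-1 / 2)`. -/
noncomputable def invSqrtCoeff (k : ℕ) : ℝ := k.centralBinom / 4 ^ k

noncomputable def arcsinCoeff (k : ℕ) : ℝ := invSqrtCoeff k / (2 * k + 1)

lemma invSqrtCoeff_nonneg (k : ℕ) : 0 ≤ invSqrtCoeff k := by
  unfold invSqrtCoeff; positivity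

lemma invSqrtCoeff_le_one (k : ℕ) : invSqrtCoeff k ≤ 1 :=
  div_le_one_of_le₀ (by exact_mod_cast Nat.centralBinom_le_four_pow k) (by positivity)

@[simp] lemma invSqrtCoeff_zero : invSqrtCoeff 0 = 1 := by simp [invSqrtCoeff]

lemma invSqrtCoeff_succ (k : ℕ) :
    (2 * k + 2) * invSqrtCoeff (k + 1) = (2 * k + 1) * invSqrtCoeff k := by
  have h : ((k + 1 : ℕ) : ℝ) * (k + 1).centralBinom = 2 * (2 * k + 1) * k.centralBinom := by
    exact_mod_cast Nat.succ_mul_centralBinom_succ k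
  simp only [invSqrtCoeff, pow_succ]
  push_cast at h
  field_simp
  linear_combination 2 * h

lemma arcsinCoeff_nonneg (k : ℕ) : 0 ≤ arcsinCoeff k :=
  div_nonneg (invSqrtCoeff_nonneg k) (by positivity)

lemma arcsinCoeff_le_one (k : ℕ) : arcsinCoeff k ≤ 1 :=
  div_le_one_of_le₀ ((invSqrtCoeff_le_one k).trans (by linarith [k.cast_nonneg (α := ℝ)]))
    (by positivity)

@[simp] lemma arcsinCoeff_zero : arcsinCoeff 0 = 1 := by simp [arcsinCoeff]

noncomputable def invSqrtSeries (x : ℝ) : ℝ := ∑' k, invSqrtCoeff k * x ^ (2 * k)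

noncomputable def arcsinSeries (x : ℝ) : ℝ := ∑' k, arcsinCoeff k * x ^ (2 * k + 1)

lemma abs_invSqrtCoeff_le (k : ℕ) : |invSqrtCoeff k| ≤ 2 * (k + 1) := by
  rw [abs_of_nonneg (invSqrtCoeff_nonneg k)]
  linarith [invSqrtCoeff_le_one k, k.cast_nonneg (α := ℝ)]

lemma abs_invSqrtCoeff_mul_le (k : ℕ) : |invSqrtCoeff k * (2 * k : ℕ)| ≤ 2 * (k + 1) := by
  rw [abs_of_nonneg (by positivity [invSqrtCoeff_nonneg k])]
  push_cast
  nlinarith [invSqrtCoeff_le_one k, invSqrtCoeff_nonneg k, k.cast_nonneg (α := ℝ)]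

lemma abs_arcsinCoeff_le (k : ℕ) : |arcsinCoeff k| ≤ 2 * (k + 1) := by
  rw [abs_of_nonneg (arcsinCoeff_nonneg k)]
  linarith [arcsinCoeff_le_one k, k.cast_nonneg (α := ℝ)]

lemma hasDerivAt_invSqrtSeries {x : ℝ} (hx : |x| < 1) :
    HasDerivAt invSqrtSeries (∑' k, invSqrtCoeff k * (2 * k : ℕ) * x ^ (2 * k - 1)) x :=
  hasDerivAt_tsum_mul_pow abs_invSqrtCoeff_le abs_invSqrtCoeff_mul_le (fun k => by omega) hx

lemma hasDerivAt_arcsinSeries {x : ℝ} (hx : |x| < 1) :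
    HasDerivAt arcsinSeries (invSqrtSeries x) x := by
  have hcoeff (k : ℕ) : arcsinCoeff k * (2 * k + 1 : ℕ) = invSqrtCoeff k := by
    rw [arcsinCoeff]; push_cast; field_simp
  have h := hasDerivAt_tsum_mul_pow (c := arcsinCoeff) (e := fun k => 2 * k + 1)
    abs_arcsinCoeff_le
    (fun k => by rw [hcoeff]; exact abs_invSqrtCoeff_le k) (fun k => by omega) hx
  simp only [hcoeff, Nat.add_sub_cancel] at h
  exact h

lemma invSqrtSeries_ode {x : ℝ} (hx : |x| < 1) :
    (1 - x ^ 2) * ∑' k, invSqrtCoeff k * (2 * k : ℕ) * x ^ (2 * k - 1) = x * invSqrtSeries x := by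
  set u : ℕ → ℝ := fun k => invSqrtCoeff k * (2 * k : ℕ) * x ^ (2 * k - 1)
  set g : ℕ → ℝ := fun k => invSqrtCoeff k * x ^ (2 * k)
  have hu : Summable u :=
    summable_mul_pow abs_invSqrtCoeff_mul_le (e := fun k => 2 * k - 1) (fun k => by omega) hx
  have hg : Summable g := summable_mul_pow abs_invSqrtCoeff_le (fun k => by omega) hx
  have hrec (k : ℕ) : u (k + 1) = x ^ 2 * u k + x * g k := by
    have h := invSqrtCoeff_succ k
    rcases k with _ | j
    · simp only [u, g, invSqrtCoeff_zero, Nat.cast_mul, Nat.cast_ofNat, Nat.cast_one,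
        Nat.cast_zero, mul_zero, zero_add, mul_one, pow_zero] at h ⊢
      linear_combination x * h
    · simp only [u, g, show 2 * (j + 1 + 1) - 1 = 2 * j + 3 by omega,
        show 2 * (j + 1) = 2 * j + 2 by omega]
      push_cast at h ⊢
      linear_combination x ^ (2 * j + 3) * h
  have hshift : ∑' k, u k = ∑' k, u (k + 1) := by
    rw [hu.tsum_eq_zero_add]; simp [u]
  calc (1 - x ^ 2) * ∑' k, u k = ∑' k, u (k + 1) - x ^ 2 * ∑' k, u k := by rw [← hshift]; ring
    _ = x * invSqrtSeries x := by
      rw [tsum_congr hrec, (hu.mul_left _).tsum_add (hg.mul_left _), tsum_mul_left, tsum_mul_left]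
      simp only [invSqrtSeries, g]; ring

lemma apply_eq_apply_zero_of_hasDerivAt_zero {f : ℝ → ℝ}
    (hf : ∀ y, |y| < 1 → HasDerivAt f 0 y) {x : ℝ} (hx : |x| < 1) : f x = f 0 :=
  isOpen_Ioo.is_const_of_deriv_eq_zero isPreconnected_Ioo
    (fun y hy => (hf y (abs_lt.mpr hy)).differentiableAt.differentiableWithinAt)
    (fun y hy => (hf y (abs_lt.mpr hy)).deriv) (abs_lt.mp hx) (by norm_num : (0 : ℝ) ∈ Ioo (-1) 1)

lemma invSqrtSeries_zero : invSqrtSeries 0 = 1 := by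
  rw [invSqrtSeries, tsum_eq_single 0 fun k hk => by simp [hk]]
  simp

lemma invSqrtSeries_eq {x : ℝ} (hx : |x| < 1) : invSqrtSeries x = 1 / √(1 - x ^ 2) := by
  have hpos {y : ℝ} (hy : |y| < 1) : 0 < 1 - y ^ 2 := by
    nlinarith [abs_lt.mp hy, sq_abs y, abs_nonneg y]
  have hconst : ∀ y, |y| < 1 → HasDerivAt (fun z => invSqrtSeries z * √(1 - z ^ 2)) 0 y := by
    intro y hy
    have hsqrt : HasDerivAt (fun z => √(1 - z ^ 2)) (-(2 * y) / (2 * √(1 - y ^ 2))) y := by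
      refine HasDerivAt.sqrt ?_ (hpos hy).ne'
      simpa using (hasDerivAt_pow 2 y).const_sub 1
    refine ((hasDerivAt_invSqrtSeries hy).mul hsqrt).congr_deriv ?_
    have hs : √(1 - y ^ 2) ^ 2 = 1 - y ^ 2 := Real.sq_sqrt (hpos hy).le
    have hs0 : √(1 - y ^ 2) ≠ 0 := (Real.sqrt_pos.mpr (hpos hy)).ne'
    field_simp
    rw [hs, mul_comm, invSqrtSeries_ode hy]
    ring
  have h := apply_eq_apply_zero_of_hasDerivAt_zero hconst hx
  norm_num [invSqrtSeries_zero] at h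
  rw [eq_div_iff (Real.sqrt_pos.mpr (hpos hx)).ne', h]

lemma arcsinSeries_eq {x : ℝ} (hx : |x| < 1) : arcsinSeries x = Real.arcsin x := by
  have hderiv : ∀ y, |y| < 1 → HasDerivAt (fun z => arcsinSeries z - Real.arcsin z) 0 y := by
    intro y hy
    obtain ⟨hy₁, hy₂⟩ := abs_lt.mp hy
    have h := (hasDerivAt_arcsinSeries hy).sub (Real.hasDerivAt_arcsin hy₁.ne' hy₂.ne)
    rwa [invSqrtSeries_eq hy, sub_self] at h
  have h0 : arcsinSeries 0 = 0 := by simp [arcsinSeries]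
  have h := apply_eq_apply_zero_of_hasDerivAt_zero hderiv hx
  rwa [h0, Real.arcsin_zero, sub_zero, sub_eq_zero] at h

lemma hasSum_arcsin_sub_self {x : ℝ} (hx : |x| < 1) :
    HasSum (fun k => arcsinCoeff (k + 1) * x ^ (2 * (k + 1) + 1)) (Real.arcsin x - x) := by
  have h : HasSum (fun k => arcsinCoeff k * x ^ (2 * k + 1)) (Real.arcsin x) := by
    rw [← arcsinSeries_eq hx]
    exact (summable_mul_pow abs_arcsinCoeff_le (fun k => by omega) hx).hasSum
  simpa using (hasSum_nat_add_iff' 1).mpr h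

namespace Matrix

theorem PosSemidef.sq_apply_le {n : Type*} {M : Matrix n n ℝ} (hM : M.PosSemidef) (i j : n) :
    M i j ^ 2 ≤ M i i * M j j := by
  have hsymm : M j i = M i j := hM.isHermitian.apply i j
  have hdet := (hM.submatrix ![i, j]).det_nonneg
  rw [det_fin_two] at hdet
  simp only [submatrix_apply, cons_val_zero, cons_val_one, cons_val_fin_one, hsymm] at hdet
  nlinarith

variable {n : Type*} [Fintype n]

theorem PosSemidef.map_pow {𝕜 : Type*} [RCLike 𝕜] {M : Matrix n n 𝕜} (hM : M.PosSemidef)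
    (k : ℕ) : (M.map (· ^ k)).PosSemidef := by
  induction k with
  | zero =>
    convert posSemidef_vecMulVec_self_star (1 : n → 𝕜) using 1
    ext i j
    simp [vecMulVec_apply]
  | succ k ih =>
    convert ih.hadamard hM using 1
    ext i j
    simp [pow_succ]

theorem PosSemidef.map_of_hasSum {ι : Type*} {M : Matrix n n ℝ} (hM : M.PosSemidef)
    {f : ℝ → ℝ} {a : ι → ℝ} {e : ι → ℕ} (ha : ∀ k, 0 ≤ a k)
    (hf : ∀ i j, HasSum (fun k => a k * M i j ^ e k) (f (M i j))) :
    (M.map f).PosSemidef := by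
  refine .of_dotProduct_mulVec_nonneg (hM.isHermitian.map f fun _ => rfl) fun x => ?_
  let q : Matrix n n ℝ →ₗ[ℝ] ℝ :=
    { toFun := fun A => star x ⬝ᵥ A *ᵥ x
      map_add' := fun A B => by simp [add_mulVec, dotProduct_add]
      map_smul' := fun c A => by simp [smul_mulVec, dotProduct_smul] }
  have hsum : HasSum (fun k => a k • M.map (· ^ e k)) (M.map f) :=
    Pi.hasSum.2 fun i => Pi.hasSum.2 fun j => hf i j
  refine (hsum.map q (LinearMap.continuous_of_finiteDimensional q)).nonneg fun k => ?_
  simpa [q, smul_mulVec, dotProduct_smul] using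
    mul_nonneg (ha k) ((hM.map_pow (e k)).dotProduct_mulVec_nonneg x)

theorem PosSemidef.map_arcsin_sub_self {M : Matrix n n ℝ} (hM : M.PosSemidef)
    (hM₁ : ∀ i j, |M i j| < 1) : (M.map fun x => Real.arcsin x - x).PosSemidef :=
  hM.map_of_hasSum (fun k => arcsinCoeff_nonneg (k + 1)) fun i j =>
    hasSum_arcsin_sub_self (hM₁ i j)

theorem isClosed_setOf_posSemidef : IsClosed {A : Matrix n n ℝ | A.PosSemidef} := by
  simp only [posSemidef_iff_dotProduct_mulVec, Set.ofPred_and, Set.ofPred_forall]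
  refine (isClosed_eq continuous_id.matrix_conjTranspose continuous_id).inter
    (isClosed_iInter fun x => isClosed_le continuous_const ?_)
  exact continuous_const.dotProduct (continuous_id.matrix_mulVec continuous_const)

end Matrix

/-- If `M` is a real positive semidefinite matrix with unit diagonal
(a correlation matrix), then the entrywise matrix `arcsin(M) − M` is positive
semidefinite. -/
theorem stmt15 (N : ℕ) (M : Matrix (Fin N) (Fin N) ℝ)
    (hpsd : M.PosSemidef) (hdiag : ∀ i, M i i = 1) :
    (Matrix.of fun i j => Real.arcsin (M i j) - M i j).PosSemidef := by
  set g : ℝ → ℝ := fun x => Real.arcsin x - x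
  have hentry (i j : Fin N) : |M i j| ≤ 1 :=
    (sq_le_one_iff_abs_le_one _).mp (by simpa [hdiag] using hpsd.sq_apply_le i j)
  -- the arcsine series converges only on the open interval, hence the detour through `c • M`
  have hscaled : ∀ c ∈ Ioo (0 : ℝ) 1, ((c • M).map g).PosSemidef := fun c hc =>
    (hpsd.smul hc.1.le).map_arcsin_sub_self fun i j => by
      rw [Matrix.smul_apply, smul_eq_mul, abs_mul, abs_of_pos hc.1]
      calc c * |M i j| ≤ c := mul_le_of_le_one_right hc.1.le (hentry i j)
        _ < 1 := hc.2
  have hcont : Continuous fun c : ℝ => (c • M).map g :=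
    (continuous_id.smul continuous_const).matrix_map (Real.continuous_arcsin.sub continuous_id)
  have hlim : Tendsto (fun c : ℝ => (c • M).map g) (𝓝[<] 1) (𝓝 (M.map g)) := by
    simpa using hcont.continuousWithinAt (s := Iio 1) (x := 1) |>.tendsto
  exact isClosed_setOf_posSemidef.mem_of_tendsto hlim
    (mem_of_superset (Ioo_mem_nhdsLT zero_lt_one) hscaled)
end
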